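/- arXiv:2404.02133 — 5 statements merged into one kernel-verified Lean document; each statement's English description precedes it below -/
import Mathlib

section
/- Let n ≥ 1 be an integer and let (c_k)_{k∈ℤ} be complex numbers with c_k = 0 for |k| ≤ n and S = ∑_{k∈ℤ} |c_k|² < ∞. Define U(r,θ) = ∑_{k∈ℤ} c_k r^{|k|} e^{ikθ} for 0 ≤ r < 1. Then for every 0 < r < 1 and every θ, |∂_r U(r,θ)|² + r^{−2}|∂_θ U(r,θ)|² ≤ 4(n+1)² · r^{2n} · (1−r)^{−3} · S. -/
/-!
Differentiating termwise, both `|∂ᵣU|` and `r⁻¹ |∂_θ U|` are bounded by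
`B = ∑ₖ |cₖ| |k| r^(|k|-1)`. As `cₖ = 0` for `|k| ≤ n`, Cauchy–Schwarz gives
`B² ≤ S · 2 ∑_{j>n} j² r^(2(j-1))`. Writing `j = n + 1 + i` and using
`j ≤ (n + 1)(i + 1)`, the tail is at most
`(n + 1)² r^(2n) ∑ᵢ (i + 1)² r^(2i) = (n + 1)² r^(2n) (1 + r²) / (1 - r²)³`,
and `(1 + r²) / (1 - r²)³ ≤ (1 - r)⁻³`.
-/

noncomputable section

open Complex

theorem HasSum.int_natAbs {G : Type*} [AddCommGroup G] [TopologicalSpace G]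
    [IsTopologicalAddGroup G] {h : ℕ → G} {a : G} (hh : HasSum h a) :
    HasSum (fun k : ℤ => h k.natAbs) (a + a - h 0) :=
  HasSum.of_nat_of_neg (f := fun k : ℤ => h k.natAbs) (by simpa using hh) (by simpa using hh)

theorem summable_and_sq_tsum_mul_le {ι : Type*} {f g : ι → ℝ} (hf : ∀ i, 0 ≤ f i)
    (hg : ∀ i, 0 ≤ g i) (hf2 : Summable fun i => f i ^ 2) (hg2 : Summable fun i => g i ^ 2) :
    (Summable fun i => f i * g i) ∧
      (∑' i, f i * g i) ^ 2 ≤ (∑' i, f i ^ 2) * ∑' i, g i ^ 2 := by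
  obtain ⟨hsum, hle⟩ := Real.summable_and_inner_le_Lp_mul_Lq_tsum_of_nonneg .two_two hf hg
    (by simpa only [Real.rpow_two] using hf2) (by simpa only [Real.rpow_two] using hg2)
  simp only [Real.rpow_two, ← Real.sqrt_eq_rpow] at hle
  refine ⟨hsum, ?_⟩
  calc (∑' i, f i * g i) ^ 2
      ≤ (√(∑' i, f i ^ 2) * √(∑' i, g i ^ 2)) ^ 2 :=
        pow_le_pow_left₀ (tsum_nonneg fun i => mul_nonneg (hf i) (hg i)) hle 2
    _ = (∑' i, f i ^ 2) * ∑' i, g i ^ 2 := by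
        rw [mul_pow, Real.sq_sqrt (tsum_nonneg fun i => sq_nonneg _),
          Real.sq_sqrt (tsum_nonneg fun i => sq_nonneg _)]

theorem hasSum_add_one_sq_mul_geometric {𝕜 : Type*} [RCLike 𝕜] {y : 𝕜} (hy : ‖y‖ < 1) :
    HasSum (fun i : ℕ => ((i : 𝕜) + 1) ^ 2 * y ^ i) ((1 + y) / (1 - y) ^ 3) := by
  have hy1 : 1 - y ≠ 0 := sub_ne_zero.2 fun h => by simp [← h] at hy
  have h := ((hasSum_choose_mul_geometric_of_norm_lt_one 2 hy).mul_left 2).sub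
    (hasSum_choose_mul_geometric_of_norm_lt_one 1 hy)
  have hval :
      2 * (1 / (1 - y) ^ (2 + 1)) - 1 / (1 - y) ^ (1 + 1) = (1 + y) / (1 - y) ^ 3 := by
    field_simp
    ring
  rw [hval] at h
  -- `(i + 1)² = 2 (i + 2).choose 2 - (i + 1).choose 1`
  refine h.congr_fun fun i => ?_
  simp only [Nat.cast_choose_two, Nat.choose_one_right]
  push_cast
  ring

theorem summable_and_tsum_ite_lt_sq_mul_geometric_le (n : ℕ) {y : ℝ} (hy0 : 0 ≤ y)
    (hy1 : y < 1) :
    (Summable fun j : ℕ => if n < j then (j : ℝ) ^ 2 * y ^ (j - 1) else 0) ∧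
      ∑' j : ℕ, (if n < j then (j : ℝ) ^ 2 * y ^ (j - 1) else 0)
        ≤ ((n : ℝ) + 1) ^ 2 * y ^ n * ((1 + y) / (1 - y) ^ 3) := by
  set F : ℕ → ℝ := fun j => if n < j then (j : ℝ) ^ 2 * y ^ (j - 1) else 0
  have hmaj := (hasSum_add_one_sq_mul_geometric (y := y) (by
    rwa [Real.norm_eq_abs, abs_of_nonneg hy0])).mul_left (((n : ℝ) + 1) ^ 2 * y ^ n)
  have hshift : ∀ i : ℕ,
      F (i + (n + 1)) ≤ ((n : ℝ) + 1) ^ 2 * y ^ n * (((i : ℝ) + 1) ^ 2 * y ^ i) := by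
    intro i
    have hF : F (i + (n + 1)) = ((i : ℝ) + n + 1) ^ 2 * (y ^ n * y ^ i) := by
      simp only [F, if_pos (by omega : n < i + (n + 1)), show i + (n + 1) - 1 = n + i by omega,
        pow_add]
      push_cast
      ring
    have hlin : (i : ℝ) + n + 1 ≤ ((n : ℝ) + 1) * ((i : ℝ) + 1) := by
      nlinarith [(Nat.cast_nonneg i : (0 : ℝ) ≤ i), (Nat.cast_nonneg n : (0 : ℝ) ≤ n)]
    rw [hF]
    calc ((i : ℝ) + n + 1) ^ 2 * (y ^ n * y ^ i)
        ≤ (((n : ℝ) + 1) * ((i : ℝ) + 1)) ^ 2 * (y ^ n * y ^ i) := by gcongr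
      _ = _ := by ring
  have hF0 : ∀ i : ℕ, 0 ≤ F i := fun i => by positivity
  have hsum : Summable fun i => F (i + (n + 1)) :=
    hmaj.summable.of_nonneg_of_le (fun i => hF0 _) hshift
  have hF : Summable F := (summable_nat_add_iff (n + 1)).1 hsum
  refine ⟨hF, ?_⟩
  have hhead : ∑ j ∈ Finset.range (n + 1), F j = 0 :=
    Finset.sum_eq_zero fun j hj => if_neg (by rw [Finset.mem_range] at hj; omega)
  rw [← hF.sum_add_tsum_nat_add (n + 1), hhead, zero_add, ← hmaj.tsum_eq]
  exact hsum.tsum_le_tsum hshift hmaj.summable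

def tailWeight (n : ℕ) (r : ℝ) (k : ℤ) : ℝ :=
  if n < k.natAbs then k.natAbs * r ^ (k.natAbs - 1) else 0

theorem tailWeight_nonneg (n : ℕ) {r : ℝ} (hr : 0 ≤ r) (k : ℤ) : 0 ≤ tailWeight n r k := by
  unfold tailWeight
  split_ifs <;> positivity

theorem one_add_sq_div_one_sub_sq_pow_three_le {r : ℝ} (hr0 : 0 ≤ r) (hr1 : r < 1) :
    (1 + r ^ 2) / (1 - r ^ 2) ^ 3 ≤ ((1 - r) ^ 3)⁻¹ := by
  have h1r : 0 < 1 - r := sub_pos.2 hr1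
  rw [show (1 - r ^ 2) ^ 3 = (1 - r) ^ 3 * (1 + r) ^ 3 by ring, div_le_iff₀ (by positivity),
    inv_mul_cancel_left₀ (by positivity)]
  nlinarith [pow_nonneg hr0 3]

theorem summable_and_tsum_sq_tailWeight_le (n : ℕ) {r : ℝ} (hr0 : 0 ≤ r) (hr1 : r < 1) :
    (Summable fun k => tailWeight n r k ^ 2) ∧
      ∑' k, tailWeight n r k ^ 2 ≤ 2 * ((n : ℝ) + 1) ^ 2 * r ^ (2 * n) * ((1 - r) ^ 3)⁻¹ := by
  obtain ⟨hF, hle⟩ :=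
    summable_and_tsum_ite_lt_sq_mul_geometric_le n (sq_nonneg r) (by nlinarith)
  have hsq : (fun k => tailWeight n r k ^ 2) = fun k : ℤ =>
      (fun j : ℕ => if n < j then (j : ℝ) ^ 2 * (r ^ 2) ^ (j - 1) else 0) k.natAbs := by
    ext k
    simp only [tailWeight]
    split_ifs <;> ring
  have hsum := hF.hasSum.int_natAbs
  rw [if_neg (Nat.not_lt_zero n), sub_zero, ← hsq] at hsum
  refine ⟨hsum.summable, ?_⟩
  rw [hsum.tsum_eq]
  rw [← pow_mul] at hle
  calc ∑' j : ℕ, _ + ∑' j : ℕ, _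
      ≤ 2 * (((n : ℝ) + 1) ^ 2 * r ^ (2 * n) * ((1 + r ^ 2) / (1 - r ^ 2) ^ 3)) := by
        linarith
    _ ≤ 2 * ((n : ℝ) + 1) ^ 2 * r ^ (2 * n) * ((1 - r) ^ 3)⁻¹ := by
        rw [← mul_assoc, ← mul_assoc]
        gcongr
        exact one_add_sq_div_one_sub_sq_pow_three_le hr0 hr1

theorem norm_mul_natAbs_mul_pow_eq_tailWeight {n : ℕ} {c : ℤ → ℂ}
    (hc0 : ∀ k : ℤ, k.natAbs ≤ n → c k = 0) (r : ℝ) (k : ℤ) :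
    ‖c k‖ * (k.natAbs * r ^ (k.natAbs - 1)) = ‖c k‖ * tailWeight n r k := by
  unfold tailWeight
  split_ifs with h
  · rfl
  · simp [hc0 k (not_lt.1 h)]

theorem summable_norm_mul_natAbs_mul_pow {n : ℕ} {c : ℤ → ℂ}
    (hc0 : ∀ k : ℤ, k.natAbs ≤ n → c k = 0) (hc : Summable fun k : ℤ => ‖c k‖ ^ 2)
    {r : ℝ} (hr0 : 0 ≤ r) (hr1 : r < 1) :
    Summable fun k => ‖c k‖ * (k.natAbs * r ^ (k.natAbs - 1)) := by
  simpa only [norm_mul_natAbs_mul_pow_eq_tailWeight hc0] using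
    (summable_and_sq_tsum_mul_le (fun k => norm_nonneg (c k)) (tailWeight_nonneg n hr0) hc
      (summable_and_tsum_sq_tailWeight_le n hr0 hr1).1).1

theorem summable_norm_mul_pow_natAbs {c : ℤ → ℂ} (hc : Summable fun k : ℤ => ‖c k‖ ^ 2)
    {r : ℝ} (hr0 : 0 ≤ r) (hr1 : r < 1) :
    Summable fun k : ℤ => ‖c k‖ * r ^ k.natAbs := by
  refine (summable_and_sq_tsum_mul_le (fun k => norm_nonneg (c k)) (fun k => by positivity) hc
    ?_).1
  exact ((hasSum_geometric_of_lt_one (sq_nonneg r) (by nlinarith)).int_natAbs).summable.congr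
    fun k => pow_right_comm r 2 k.natAbs

theorem hasDerivAt_tsum_mul_pow {ι : Type*} {a : ι → ℂ} {m : ι → ℕ} {ρ r : ℝ}
    (hu : Summable fun i => ‖a i‖ * (m i * ρ ^ (m i - 1))) (hr : |r| < ρ)
    (h0 : Summable fun i => a i * (r : ℂ) ^ m i) :
    HasDerivAt (fun s : ℝ => ∑' i, a i * (s : ℂ) ^ m i)
      (∑' i, a i * (m i * (r : ℂ) ^ (m i - 1))) r := by
  have hrρ := abs_lt.1 hr
  refine hasDerivAt_tsum_of_isPreconnected (t := Set.Ioo (-ρ) ρ) hu isOpen_Ioo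
    isPreconnected_Ioo
    (fun i s _ => ((hasDerivAt_pow (m i) (s : ℂ)).comp_ofReal).const_mul (a i))
    (fun i s hs => ?_) hrρ h0 hrρ
  rw [norm_mul, norm_mul, norm_pow, Complex.norm_natCast, Complex.norm_real, Real.norm_eq_abs]
  gcongr
  exact abs_le.2 ⟨hs.1.le, hs.2.le⟩

theorem norm_cexp_intCast_mul_ofReal_mul_I (k : ℤ) (t : ℝ) : ‖exp (k * t * I)‖ = 1 := by
  simpa using norm_exp_ofReal_mul_I (k * t)

theorem hasDerivAt_tsum_mul_cexp {a : ℤ → ℂ} (ha : Summable fun k => ‖a k‖)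
    (hu : Summable fun k => ‖a k‖ * k.natAbs) (t : ℝ) :
    HasDerivAt (fun t : ℝ => ∑' k, a k * exp (k * t * I))
      (∑' k, a k * (k * I * exp (k * t * I))) t := by
  have hbase : Summable fun k => a k * exp (k * t * I) :=
    ha.of_norm_bounded fun k => by rw [norm_mul, norm_cexp_intCast_mul_ofReal_mul_I, mul_one]
  refine hasDerivAt_tsum (g := fun k (s : ℝ) => a k * exp (k * s * I))
    (g' := fun k (s : ℝ) => a k * (k * I * exp (k * s * I))) hu (fun k s => ?_) (fun k s => ?_)
    hbase t
  · have := ((((hasDerivAt_id (s : ℂ)).const_mul (k : ℂ)).mul_const I).cexp.comp_ofReal).const_mul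
      (a k)
    simp only [id, mul_one] at this
    rwa [mul_comm (cexp _)] at this
  · rw [norm_mul, norm_mul, norm_mul, norm_cexp_intCast_mul_ofReal_mul_I, Complex.norm_I,
      Complex.norm_intCast, Nat.cast_natAbs, Int.cast_abs, mul_one, mul_one]

def harmonicExtension (c : ℤ → ℂ) (r θ : ℝ) : ℂ :=
  ∑' k : ℤ, c k * (r : ℂ) ^ k.natAbs * exp (k * θ * I)

section HarmonicExtension

variable {n : ℕ} {c : ℤ → ℂ} {r : ℝ}

theorem norm_deriv_harmonicExtension_radius_le (hc0 : ∀ k : ℤ, k.natAbs ≤ n → c k = 0)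
    (hc : Summable fun k : ℤ => ‖c k‖ ^ 2) (hr0 : 0 < r) (hr1 : r < 1) (θ : ℝ) :
    ‖deriv (fun s => harmonicExtension c s θ) r‖
      ≤ ∑' k, ‖c k‖ * (k.natAbs * r ^ (k.natAbs - 1)) := by
  have hnorm : ∀ k : ℤ, ‖c k * exp (k * θ * I)‖ = ‖c k‖ := fun k => by
    rw [norm_mul, norm_cexp_intCast_mul_ofReal_mul_I, mul_one]
  have hfun : (fun s => harmonicExtension c s θ)
      = fun s : ℝ => ∑' k, c k * exp (k * θ * I) * (s : ℂ) ^ k.natAbs := by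
    ext s
    simp only [harmonicExtension, mul_right_comm]
  have hρ : Summable fun k : ℤ => ‖c k‖ * (k.natAbs * ((1 + r) / 2) ^ (k.natAbs - 1)) :=
    summable_norm_mul_natAbs_mul_pow hc0 hc (by positivity) (by linarith)
  have hD := hasDerivAt_tsum_mul_pow (a := fun k => c k * exp (k * θ * I)) (m := Int.natAbs)
    (by simpa only [hnorm] using hρ)
    (by rw [abs_of_pos hr0]; linarith)
    ((summable_norm_mul_pow_natAbs hc hr0.le hr1).of_norm_bounded fun k => by
      rw [norm_mul, hnorm, norm_pow, Complex.norm_real, Real.norm_of_nonneg hr0.le])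
  have hterm : ∀ k : ℤ, ‖c k * exp (k * θ * I) * (k.natAbs * (r : ℂ) ^ (k.natAbs - 1))‖
      = ‖c k‖ * (k.natAbs * r ^ (k.natAbs - 1)) := fun k => by
    rw [norm_mul, hnorm, norm_mul, norm_pow, Complex.norm_natCast, Complex.norm_real,
      Real.norm_of_nonneg hr0.le]
  rw [hfun, hD.deriv]
  refine (norm_tsum_le_tsum_norm ?_).trans_eq (tsum_congr hterm)
  simpa only [hterm] using summable_norm_mul_natAbs_mul_pow hc0 hc hr0.le hr1

theorem norm_deriv_harmonicExtension_angle_le (hc0 : ∀ k : ℤ, k.natAbs ≤ n → c k = 0)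
    (hc : Summable fun k : ℤ => ‖c k‖ ^ 2) (hr0 : 0 < r) (hr1 : r < 1) (θ : ℝ) :
    ‖deriv (fun t => harmonicExtension c r t) θ‖
      ≤ r * ∑' k, ‖c k‖ * (k.natAbs * r ^ (k.natAbs - 1)) := by
  have hnorm : ∀ k : ℤ, ‖c k * (r : ℂ) ^ k.natAbs‖ = ‖c k‖ * r ^ k.natAbs := fun k => by
    rw [norm_mul, norm_pow, Complex.norm_real, Real.norm_of_nonneg hr0.le]
  have hweight : ∀ k : ℤ, ‖c k * (r : ℂ) ^ k.natAbs‖ * k.natAbs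
      = r * (‖c k‖ * (k.natAbs * r ^ (k.natAbs - 1))) := fun k => by
    rw [hnorm]
    rcases k.natAbs with _ | m
    · simp
    · simp only [Nat.add_sub_cancel, pow_succ]
      ring
  have hu : Summable fun k : ℤ => ‖c k * (r : ℂ) ^ k.natAbs‖ * k.natAbs := by
    simpa only [hweight] using (summable_norm_mul_natAbs_mul_pow hc0 hc hr0.le hr1).mul_left r
  have hD := hasDerivAt_tsum_mul_cexp (a := fun k => c k * (r : ℂ) ^ k.natAbs)
    (by simpa only [hnorm] using summable_norm_mul_pow_natAbs hc hr0.le hr1) hu θ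
  have hterm : ∀ k : ℤ, ‖c k * (r : ℂ) ^ k.natAbs * (k * I * exp (k * θ * I))‖
      = ‖c k * (r : ℂ) ^ k.natAbs‖ * k.natAbs := fun k => by
    simp only [norm_mul, norm_cexp_intCast_mul_ofReal_mul_I, Complex.norm_I,
      Complex.norm_intCast, Nat.cast_natAbs, Int.cast_abs, mul_one]
  unfold harmonicExtension
  rw [hD.deriv, ← tsum_mul_left]
  refine (norm_tsum_le_tsum_norm ?_).trans_eq
    (tsum_congr fun k => (hterm k).trans (hweight k))
  simpa only [hterm] using hu

end HarmonicExtension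

theorem stmt7_general (n : ℕ) (c : ℤ → ℂ)
    (hc0 : ∀ k : ℤ, k.natAbs ≤ n → c k = 0)
    (hc : Summable fun k : ℤ => ‖c k‖ ^ 2)
    (U : ℝ → ℝ → ℂ)
    (hU : ∀ r θ : ℝ, U r θ =
      ∑' k : ℤ, c k * (r : ℂ) ^ k.natAbs * Complex.exp ((k : ℂ) * θ * Complex.I))
    (r θ : ℝ) (hr0 : 0 < r) (hr1 : r < 1) :
    ‖deriv (fun s : ℝ => U s θ) r‖ ^ 2 + ‖deriv (fun t : ℝ => U r t) θ‖ ^ 2 / r ^ 2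
      ≤ 4 * ((n : ℝ) + 1) ^ 2 * r ^ (2 * n) * ((1 - r) ^ 3)⁻¹ * ∑' k : ℤ, ‖c k‖ ^ 2 := by
  obtain rfl : U = harmonicExtension c := funext fun s => funext (hU s)
  set B := ∑' k, ‖c k‖ * (k.natAbs * r ^ (k.natAbs - 1))
  have hradius := norm_deriv_harmonicExtension_radius_le hc0 hc hr0 hr1 θ
  have hangle := norm_deriv_harmonicExtension_angle_le hc0 hc hr0 hr1 θ
  obtain ⟨hw, hW⟩ := summable_and_tsum_sq_tailWeight_le n hr0.le hr1
  have hB : B ^ 2 ≤ (∑' k, ‖c k‖ ^ 2) * ∑' k, tailWeight n r k ^ 2 := by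
    simpa only [B, norm_mul_natAbs_mul_pow_eq_tailWeight hc0] using
      (summable_and_sq_tsum_mul_le (fun k => norm_nonneg (c k)) (tailWeight_nonneg n hr0.le)
        hc hw).2
  have hangle' : ‖deriv (fun t => harmonicExtension c r t) θ‖ ^ 2 / r ^ 2 ≤ B ^ 2 := by
    rw [div_le_iff₀ (by positivity), ← mul_pow, mul_comm B]
    exact pow_le_pow_left₀ (norm_nonneg _) hangle 2
  calc _ ≤ B ^ 2 + B ^ 2 := add_le_add (pow_le_pow_left₀ (norm_nonneg _) hradius 2) hangle'
    _ ≤ 2 * ((∑' k, ‖c k‖ ^ 2) *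
          (2 * ((n : ℝ) + 1) ^ 2 * r ^ (2 * n) * ((1 - r) ^ 3)⁻¹)) := by
        have := hB.trans (mul_le_mul_of_nonneg_left hW (tsum_nonneg fun k => sq_nonneg ‖c k‖))
        linarith
    _ = _ := by ring

theorem stmt7 (n : ℕ) (hn : 1 ≤ n) (c : ℤ → ℂ)
    (hc0 : ∀ k : ℤ, k.natAbs ≤ n → c k = 0)
    (hc : Summable fun k : ℤ => ‖c k‖ ^ 2)
    (U : ℝ → ℝ → ℂ)
    (hU : ∀ r θ : ℝ, U r θ =
      ∑' k : ℤ, c k * (r : ℂ) ^ k.natAbs * Complex.exp ((k : ℂ) * θ * Complex.I))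
    (r θ : ℝ) (hr0 : 0 < r) (hr1 : r < 1) :
    ‖deriv (fun s : ℝ => U s θ) r‖ ^ 2 + ‖deriv (fun t : ℝ => U r t) θ‖ ^ 2 / r ^ 2
      ≤ 4 * ((n : ℝ) + 1) ^ 2 * r ^ (2 * n) * ((1 - r) ^ 3)⁻¹ * ∑' k : ℤ, ‖c k‖ ^ 2 :=
  stmt7_general n c hc0 hc U hU r θ hr0 hr1
end
end

section
/- For every integer ℓ ≥ 1 there exists a constant C_ℓ > 0 such that the following holds. Let n ≥ 1 be an integer and let (c_k)_{k∈ℤ} be complex numbers with c_k = 0 for |k| ≤ n and S = ∑_{k∈ℤ} |c_k|² < ∞, and define U(r,θ) = ∑_{k∈ℤ} c_k r^{|k|} e^{ikθ}. Then for every θ, the map r ↦ U(r,θ) is ℓ-times differentiable on (0,1) and |∂_r^ℓ U(r,θ)| ≤ C_ℓ · n^ℓ · r^{n+1−ℓ} · (1−r)^{−(ℓ+1/2)} · √S for all 0 < r < 1. -/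
/-!
Differentiating termwise, `∂_r^ℓ U(r, θ) = ∑ₖ cₖ e^{ikθ} (|k|)_ℓ r^{|k|-ℓ}` with `(m)_ℓ` the falling
factorial, and only `|k| > n` contribute. Cauchy–Schwarz bounds this by
`√S · (2 ∑_{m > n} ((m)_ℓ r^{m-ℓ})²)^{1/2}`. Writing `m = n + 1 + j`, we have
`(m)_ℓ ≤ m^ℓ ≤ (2n(j+1))^ℓ` and `r^{m-ℓ} ≤ r^{n+1-ℓ} r^j`, while
`∑ⱼ (j+1)^{2ℓ} r^{2j} ≤ (2ℓ)! (1-r²)^{-(2ℓ+1)} ≤ (2ℓ)! (1-r)^{-(2ℓ+1)}`.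
-/

open MeasureTheory

noncomputable section

open Set

theorem tsum_mul_le_sqrt_tsum_sq_mul_sqrt_tsum_sq {ι : Type*} {f g : ι → ℝ}
    (hf : ∀ i, 0 ≤ f i) (hg : ∀ i, 0 ≤ g i)
    (hf2 : Summable fun i => f i ^ 2) (hg2 : Summable fun i => g i ^ 2) :
    ∑' i, f i * g i ≤ √(∑' i, f i ^ 2) * √(∑' i, g i ^ 2) := by
  simpa [Real.sqrt_eq_rpow] using Real.inner_le_Lp_mul_Lq_tsum_of_nonneg .two_two hf hg
    (by simpa using hf2) (by simpa using hg2)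

theorem summable_natAbs {G : Type*} [AddCommGroup G] [TopologicalSpace G] [IsTopologicalAddGroup G]
    {v : ℕ → G} (hv : Summable v) : Summable fun k : ℤ => v k.natAbs :=
  .of_nat_of_neg (by simpa using hv) (by simpa using hv)

theorem tsum_natAbs_le {v : ℕ → ℝ} (h0 : ∀ m, 0 ≤ v m) (hv : Summable v) :
    ∑' k : ℤ, v k.natAbs ≤ 2 * ∑' m, v m := by
  rw [Summable.tsum_of_nat_of_neg (by simpa using hv) (by simpa using hv)]
  simp only [Int.natAbs_natCast, Int.natAbs_neg, Int.natAbs_zero]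
  linarith [h0 0]

theorem hasSum_ite_le {M : Type*} [AddCommGroup M] [TopologicalSpace M] [IsTopologicalAddGroup M]
    {f : ℕ → M} {s : M} (n : ℕ) (h : HasSum (fun j => f (n + 1 + j)) s) :
    HasSum (fun m => if m ≤ n then 0 else f m) s := by
  rw [← hasSum_nat_add_iff' (n + 1), Finset.sum_eq_zero fun m hm =>
    if_pos (Nat.lt_succ_iff.1 (Finset.mem_range.1 hm)), sub_zero]
  convert h using 2 with j
  rw [if_neg (by omega), add_comm]

theorem norm_le_sqrt_tsum_norm_sq {ι E : Type*} [SeminormedAddCommGroup E] {f : ι → E}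
    (hf : Summable fun i => ‖f i‖ ^ 2) (i : ι) : ‖f i‖ ≤ √(∑' i, ‖f i‖ ^ 2) :=
  Real.le_sqrt_of_sq_le (hf.le_tsum i fun _ _ => sq_nonneg _)

theorem summable_natAbs_pow_mul_geometric (j : ℕ) {b : ℝ} (hb0 : 0 ≤ b) (hb1 : b < 1) :
    Summable fun k : ℤ => (k.natAbs : ℝ) ^ j * b ^ k.natAbs :=
  summable_natAbs (summable_pow_mul_geometric_of_norm_lt_one (R := ℝ) j
    (by rwa [Real.norm_of_nonneg hb0]))

open Nat in
theorem add_one_pow_mul_pow_le_factorial_mul (d j : ℕ) {x : ℝ} (hx : 0 ≤ x) :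
    ((j : ℝ) + 1) ^ d * x ^ j ≤ d ! * ((j + d).choose d * x ^ j) := by
  have h := Nat.pow_succ_le_ascFactorial (j + 1) d
  rw [Nat.ascFactorial_eq_factorial_mul_choose] at h
  rw [← mul_assoc]
  gcongr
  exact_mod_cast h

theorem summable_add_one_pow_mul_geometric (d : ℕ) {x : ℝ} (h0 : 0 ≤ x) (h1 : x < 1) :
    Summable fun j : ℕ => ((j : ℝ) + 1) ^ d * x ^ j :=
  .of_nonneg_of_le (fun _ => by positivity) (fun j => add_one_pow_mul_pow_le_factorial_mul d j h0)
    ((summable_choose_mul_geometric_of_norm_lt_one (R := ℝ) d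
      (by rwa [Real.norm_of_nonneg h0])).mul_left _)

open Nat in
theorem tsum_add_one_pow_mul_geometric_le (d : ℕ) {x : ℝ} (h0 : 0 ≤ x) (h1 : x < 1) :
    ∑' j : ℕ, ((j : ℝ) + 1) ^ d * x ^ j ≤ d ! / (1 - x) ^ (d + 1) := by
  have hx : ‖x‖ < 1 := by rwa [Real.norm_of_nonneg h0]
  calc ∑' j : ℕ, ((j : ℝ) + 1) ^ d * x ^ j
      ≤ ∑' j : ℕ, (d ! : ℝ) * ((j + d).choose d * x ^ j) :=
        (summable_add_one_pow_mul_geometric d h0 h1).tsum_le_tsum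
          (fun j => add_one_pow_mul_pow_le_factorial_mul d j h0)
          ((summable_choose_mul_geometric_of_norm_lt_one d hx).mul_left _)
    _ = d ! / (1 - x) ^ (d + 1) := by
      rw [tsum_mul_left, tsum_choose_mul_geometric_of_norm_lt_one d hx, mul_one_div]

theorem pow_sub_le_pow_mul_inv_pow {b : ℝ} (hb0 : 0 < b) (hb1 : b ≤ 1) (m j : ℕ) :
    b ^ (m - j) ≤ b ^ m * b⁻¹ ^ j := by
  rw [inv_pow, ← div_eq_mul_inv, le_div_iff₀ (pow_pos hb0 j), ← pow_add]
  exact pow_le_pow_of_le_one hb0.le hb1 (by omega)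

theorem hasDerivAt_mul_descFactorial_mul_pow (z : ℂ) (m j : ℕ) (y : ℝ) :
    HasDerivAt (fun y : ℝ => z * (m.descFactorial j : ℂ) * (y : ℂ) ^ (m - j))
      (z * (m.descFactorial (j + 1) : ℂ) * (y : ℂ) ^ (m - (j + 1))) y := by
  refine (((hasDerivAt_pow (m - j) (y : ℂ)).comp_ofReal).const_mul
    (z * (m.descFactorial j : ℂ))).congr_deriv ?_
  rw [Nat.descFactorial_succ, Nat.sub_sub]
  push_cast
  ring

/-- The `j`-th termwise derivative of `r ↦ ∑ a k * r ^ |k|`. The truncated exponent `|k| - j`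
is harmless: the falling factorial vanishes when `|k| < j`. -/
def termwiseIteratedDeriv (a : ℤ → ℂ) (j : ℕ) (r : ℝ) : ℂ :=
  ∑' k : ℤ, a k * (k.natAbs.descFactorial j : ℂ) * (r : ℂ) ^ (k.natAbs - j)

section termwiseIteratedDeriv

variable {a : ℤ → ℂ} {M : ℝ}

theorem norm_mul_descFactorial_mul_pow_le (ha : ∀ k, ‖a k‖ ≤ M) {b y : ℝ} (hb0 : 0 < b)
    (hb1 : b ≤ 1) (hyb : |y| ≤ b) (j : ℕ) (k : ℤ) :
    ‖a k * (k.natAbs.descFactorial j : ℂ) * (y : ℂ) ^ (k.natAbs - j)‖ ≤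
      M * b⁻¹ ^ j * ((k.natAbs : ℝ) ^ j * b ^ k.natAbs) := by
  have hdesc : (k.natAbs.descFactorial j : ℝ) ≤ (k.natAbs : ℝ) ^ j := by
    exact_mod_cast Nat.descFactorial_le_pow _ _
  have hpow : |y| ^ (k.natAbs - j) ≤ b ^ k.natAbs * b⁻¹ ^ j :=
    (pow_le_pow_left₀ (abs_nonneg y) hyb _).trans (pow_sub_le_pow_mul_inv_pow hb0 hb1 _ _)
  have hM : 0 ≤ M := (norm_nonneg _).trans (ha 0)
  rw [norm_mul, norm_mul, norm_pow, Complex.norm_natCast, Complex.norm_real, Real.norm_eq_abs]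
  calc ‖a k‖ * (k.natAbs.descFactorial j : ℝ) * |y| ^ (k.natAbs - j)
      ≤ M * (k.natAbs : ℝ) ^ j * (b ^ k.natAbs * b⁻¹ ^ j) :=
        mul_le_mul (mul_le_mul (ha k) hdesc (by positivity) hM) hpow (by positivity)
          (mul_nonneg hM (by positivity))
    _ = _ := by ring

theorem summable_norm_mul_descFactorial_mul_pow (ha : ∀ k, ‖a k‖ ≤ M) (j : ℕ) {y : ℝ}
    (hy : |y| < 1) :
    Summable fun k : ℤ => ‖a k * (k.natAbs.descFactorial j : ℂ) * (y : ℂ) ^ (k.natAbs - j)‖ := by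
  obtain ⟨b, hyb, hb1⟩ := exists_between hy
  have hb0 : 0 < b := (abs_nonneg y).trans_lt hyb
  exact .of_nonneg_of_le (fun _ => norm_nonneg _)
    (norm_mul_descFactorial_mul_pow_le ha hb0 hb1.le hyb.le j)
    ((summable_natAbs_pow_mul_geometric j hb0.le hb1).mul_left _)

theorem hasDerivAt_termwiseIteratedDeriv (ha : ∀ k, ‖a k‖ ≤ M) (j : ℕ) {r : ℝ}
    (hr : r ∈ Ioo (-1) 1) :
    HasDerivAt (termwiseIteratedDeriv a j) (termwiseIteratedDeriv a (j + 1) r) r := by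
  have hr' : |r| < 1 := abs_lt.2 hr
  obtain ⟨b, hrb, hb1⟩ := exists_between hr'
  have hb0 : 0 < b := (abs_nonneg r).trans_lt hrb
  exact hasDerivAt_tsum_of_isPreconnected
    ((summable_natAbs_pow_mul_geometric (j + 1) hb0.le hb1).mul_left (M * b⁻¹ ^ (j + 1)))
    isOpen_Ioo (convex_Ioo (-b) b).isPreconnected
    (fun k y _ => hasDerivAt_mul_descFactorial_mul_pow (a k) k.natAbs j y)
    (fun k y hy => norm_mul_descFactorial_mul_pow_le ha hb0 hb1.le
      (abs_le.2 ⟨hy.1.le, hy.2.le⟩) (j + 1) k)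
    (abs_lt.1 hrb) (summable_norm_mul_descFactorial_mul_pow ha j hr').of_norm (abs_lt.1 hrb)

theorem eqOn_iteratedDeriv_termwiseIteratedDeriv (ha : ∀ k, ‖a k‖ ≤ M) (j : ℕ) :
    EqOn (iteratedDeriv j (termwiseIteratedDeriv a 0)) (termwiseIteratedDeriv a j)
      (Ioo (-1) 1) := by
  induction j with
  | zero => exact eqOn_refl _ _
  | succ j ih =>
    intro r hr
    rw [iteratedDeriv_succ, (Filter.eventuallyEq_of_mem (isOpen_Ioo.mem_nhds hr) ih).deriv_eq]
    exact (hasDerivAt_termwiseIteratedDeriv ha j hr).deriv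

theorem contDiffOn_termwiseIteratedDeriv (ha : ∀ k, ‖a k‖ ≤ M) (m j : ℕ) :
    ContDiffOn ℝ m (termwiseIteratedDeriv a j) (Ioo (-1) 1) := by
  induction m generalizing j with
  | zero =>
    exact contDiffOn_zero.2 fun r hr =>
      (hasDerivAt_termwiseIteratedDeriv ha j hr).continuousAt.continuousWithinAt
  | succ m ih =>
    rw [Nat.cast_succ, contDiffOn_succ_iff_deriv_of_isOpen isOpen_Ioo]
    refine ⟨fun r hr => (hasDerivAt_termwiseIteratedDeriv ha j hr).differentiableAt
      |>.differentiableWithinAt, by simp, ?_⟩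
    exact (ih (j + 1)).congr fun r hr => (hasDerivAt_termwiseIteratedDeriv ha j hr).deriv

end termwiseIteratedDeriv

theorem descFactorial_mul_pow_le {n : ℕ} (hn : 1 ≤ n) (ℓ j : ℕ) {r : ℝ} (hr0 : 0 < r)
    (hr1 : r ≤ 1) :
    ((n + 1 + j).descFactorial ℓ : ℝ) * r ^ (n + 1 + j - ℓ) ≤
      2 ^ ℓ * n ^ ℓ * r ^ ((n : ℝ) + 1 - ℓ) * (((j : ℝ) + 1) ^ ℓ * r ^ j) := by
  have hn' : (1 : ℝ) ≤ n := by exact_mod_cast hn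
  have hdesc : ((n + 1 + j).descFactorial ℓ : ℝ) ≤ (2 * n * ((j : ℝ) + 1)) ^ ℓ := by
    calc ((n + 1 + j).descFactorial ℓ : ℝ) ≤ ((n + 1 + j : ℕ) : ℝ) ^ ℓ := by
          exact_mod_cast Nat.descFactorial_le_pow _ _
      _ ≤ (2 * n * ((j : ℝ) + 1)) ^ ℓ := by
          gcongr
          push_cast
          nlinarith [(Nat.cast_nonneg j : (0 : ℝ) ≤ j)]
  have hpow : r ^ (n + 1 + j - ℓ) ≤ r ^ ((n : ℝ) + 1 - ℓ) * r ^ j := by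
    rw [← Real.rpow_natCast, ← Real.rpow_natCast r j, ← Real.rpow_add hr0]
    refine Real.rpow_le_rpow_of_exponent_ge hr0 hr1 ?_
    have h : ((n + 1 + j : ℕ) : ℝ) - ℓ ≤ ((n + 1 + j - ℓ : ℕ) : ℝ) :=
      sub_le_iff_le_add.2 (by exact_mod_cast le_tsub_add)
    push_cast at h
    linarith
  calc ((n + 1 + j).descFactorial ℓ : ℝ) * r ^ (n + 1 + j - ℓ)
      ≤ (2 * n * ((j : ℝ) + 1)) ^ ℓ * (r ^ ((n : ℝ) + 1 - ℓ) * r ^ j) := by gcongr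
    _ = _ := by rw [mul_pow, mul_pow]; ring

theorem sq_descFactorial_mul_pow_le {n : ℕ} (hn : 1 ≤ n) (ℓ j : ℕ) {r : ℝ} (hr0 : 0 < r)
    (hr1 : r ≤ 1) :
    (((n + 1 + j).descFactorial ℓ : ℝ) * r ^ (n + 1 + j - ℓ)) ^ 2 ≤
      (2 ^ ℓ * n ^ ℓ * r ^ ((n : ℝ) + 1 - ℓ)) ^ 2 * (((j : ℝ) + 1) ^ (2 * ℓ) * (r ^ 2) ^ j) := by
  calc (((n + 1 + j).descFactorial ℓ : ℝ) * r ^ (n + 1 + j - ℓ)) ^ 2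
      ≤ (2 ^ ℓ * n ^ ℓ * r ^ ((n : ℝ) + 1 - ℓ) * (((j : ℝ) + 1) ^ ℓ * r ^ j)) ^ 2 :=
        pow_le_pow_left₀ (by positivity) (descFactorial_mul_pow_le hn ℓ j hr0 hr1) 2
    _ = _ := by ring

theorem summable_sq_descFactorial_mul_pow {n : ℕ} (hn : 1 ≤ n) (ℓ : ℕ) {r : ℝ}
    (hr : r ∈ Ioo 0 1) :
    Summable fun j : ℕ => (((n + 1 + j).descFactorial ℓ : ℝ) * r ^ (n + 1 + j - ℓ)) ^ 2 :=
  .of_nonneg_of_le (fun _ => sq_nonneg _) (fun j => sq_descFactorial_mul_pow_le hn ℓ j hr.1 hr.2.le)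
    ((summable_add_one_pow_mul_geometric _ (sq_nonneg r) (by nlinarith [hr.1, hr.2])).mul_left _)

open Nat in
theorem tsum_sq_descFactorial_mul_pow_le {n : ℕ} (hn : 1 ≤ n) (ℓ : ℕ) {r : ℝ}
    (hr : r ∈ Ioo 0 1) :
    ∑' j : ℕ, (((n + 1 + j).descFactorial ℓ : ℝ) * r ^ (n + 1 + j - ℓ)) ^ 2 ≤
      (2 * ℓ)! * (2 ^ ℓ * n ^ ℓ * r ^ ((n : ℝ) + 1 - ℓ) * (1 - r) ^ (-((ℓ : ℝ) + 1 / 2))) ^ 2 := by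
  obtain ⟨hr0, hr1⟩ := hr
  have h1r : 0 < 1 - r := by linarith
  have hr2 : r ^ 2 < 1 := by nlinarith
  set A := 2 ^ ℓ * (n : ℝ) ^ ℓ * r ^ ((n : ℝ) + 1 - ℓ)
  have hD : ((1 - r) ^ (-((ℓ : ℝ) + 1 / 2))) ^ 2 = ((1 - r) ^ (2 * ℓ + 1))⁻¹ := by
    rw [← Real.rpow_natCast, ← Real.rpow_mul h1r.le, ← Real.rpow_natCast, ← Real.rpow_neg h1r.le]
    push_cast
    ring_nf
  calc ∑' j : ℕ, (((n + 1 + j).descFactorial ℓ : ℝ) * r ^ (n + 1 + j - ℓ)) ^ 2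
      ≤ ∑' j : ℕ, A ^ 2 * (((j : ℝ) + 1) ^ (2 * ℓ) * (r ^ 2) ^ j) :=
        (summable_sq_descFactorial_mul_pow hn ℓ ⟨hr0, hr1⟩).tsum_le_tsum
          (fun j => sq_descFactorial_mul_pow_le hn ℓ j hr0 hr1.le)
          ((summable_add_one_pow_mul_geometric _ (sq_nonneg r) hr2).mul_left _)
    _ = A ^ 2 * ∑' j : ℕ, ((j : ℝ) + 1) ^ (2 * ℓ) * (r ^ 2) ^ j := tsum_mul_left
    _ ≤ A ^ 2 * ((2 * ℓ)! / (1 - r ^ 2) ^ (2 * ℓ + 1)) := by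
        gcongr
        exact tsum_add_one_pow_mul_geometric_le _ (sq_nonneg r) hr2
    _ ≤ A ^ 2 * ((2 * ℓ)! / (1 - r) ^ (2 * ℓ + 1)) := by
        gcongr
        nlinarith
    _ = (2 * ℓ)! * (A * (1 - r) ^ (-((ℓ : ℝ) + 1 / 2))) ^ 2 := by
        rw [mul_pow A, hD]
        ring

open Nat in
theorem norm_termwiseIteratedDeriv_le {n : ℕ} (hn : 1 ≤ n) {a : ℤ → ℂ}
    (hzero : ∀ k : ℤ, k.natAbs ≤ n → a k = 0) (hS : Summable fun k => ‖a k‖ ^ 2) (ℓ : ℕ)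
    {r : ℝ} (hr : r ∈ Ioo 0 1) :
    ‖termwiseIteratedDeriv a ℓ r‖ ≤ 2 ^ ℓ * √(2 * (2 * ℓ)!) * n ^ ℓ * r ^ ((n : ℝ) + 1 - ℓ) *
      (1 - r) ^ (-((ℓ : ℝ) + 1 / 2)) * √(∑' k, ‖a k‖ ^ 2) := by
  set v : ℕ → ℝ := fun m => if m ≤ n then 0 else (m.descFactorial ℓ : ℝ) * r ^ (m - ℓ)
  have hr0 := hr.1.le
  have hv0 : ∀ m, 0 ≤ v m := fun m => by unfold v; split_ifs <;> positivity
  have hv2 : HasSum (fun m => v m ^ 2)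
      (∑' j : ℕ, (((n + 1 + j).descFactorial ℓ : ℝ) * r ^ (n + 1 + j - ℓ)) ^ 2) := by
    have hv_sq : (fun m => v m ^ 2) =
        fun m => if m ≤ n then 0 else ((m.descFactorial ℓ : ℝ) * r ^ (m - ℓ)) ^ 2 := by
      funext m
      unfold v
      split_ifs <;> simp
    rw [hv_sq]
    exact hasSum_ite_le n (summable_sq_descFactorial_mul_pow hn ℓ hr).hasSum
  have hnorm : ∀ k : ℤ,
      ‖a k * (k.natAbs.descFactorial ℓ : ℂ) * (r : ℂ) ^ (k.natAbs - ℓ)‖ = ‖a k‖ * v k.natAbs := by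
    intro k
    by_cases hk : k.natAbs ≤ n
    · simp [v, hk, hzero k hk]
    · simp [v, hk, abs_of_pos hr.1, mul_assoc]
  have hr' : |r| < 1 := by rw [abs_of_pos hr.1]; exact hr.2
  calc ‖termwiseIteratedDeriv a ℓ r‖
      ≤ ∑' k : ℤ, ‖a k‖ * v k.natAbs :=
        (norm_tsum_le_tsum_norm (summable_norm_mul_descFactorial_mul_pow
          (norm_le_sqrt_tsum_norm_sq hS) ℓ hr')).trans_eq (tsum_congr hnorm)
    _ ≤ √(∑' k, ‖a k‖ ^ 2) * √(∑' k : ℤ, v k.natAbs ^ 2) :=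
        tsum_mul_le_sqrt_tsum_sq_mul_sqrt_tsum_sq (fun _ => norm_nonneg _) (fun _ => hv0 _) hS
          (summable_natAbs (v := fun m => v m ^ 2) hv2.summable)
    _ ≤ √(∑' k, ‖a k‖ ^ 2) * √(2 * ((2 * ℓ)! * (2 ^ ℓ * n ^ ℓ * r ^ ((n : ℝ) + 1 - ℓ) *
          (1 - r) ^ (-((ℓ : ℝ) + 1 / 2))) ^ 2)) := by
        gcongr
        calc ∑' k : ℤ, v k.natAbs ^ 2 ≤ 2 * ∑' m, v m ^ 2 :=
              tsum_natAbs_le (fun _ => sq_nonneg _) hv2.summable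
          _ ≤ _ := by
              rw [hv2.tsum_eq]
              gcongr
              exact tsum_sq_descFactorial_mul_pow_le hn ℓ hr
    _ = _ := by
        rw [← mul_assoc, Real.sqrt_mul' _ (sq_nonneg _),
          Real.sqrt_sq (mul_nonneg (by positivity) (Real.rpow_nonneg (by linarith [hr.2]) _))]
        ring

theorem stmt8_general (ℓ : ℕ) :
    ∃ C > 0, ∀ n : ℕ, 1 ≤ n → ∀ c : ℤ → ℂ,
      (∀ k : ℤ, k.natAbs ≤ n → c k = 0) →
      (Summable fun k : ℤ => ‖c k‖ ^ 2) → ∀ θ : ℝ,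
      ContDiffOn ℝ ℓ
        (fun r : ℝ =>
          ∑' k : ℤ, c k * (r : ℂ) ^ k.natAbs * Complex.exp ((k : ℂ) * θ * Complex.I))
        (Set.Ioo 0 1) ∧
      ∀ r ∈ Set.Ioo (0:ℝ) 1,
        ‖iteratedDeriv ℓ
            (fun r : ℝ =>
              ∑' k : ℤ, c k * (r : ℂ) ^ k.natAbs * Complex.exp ((k : ℂ) * θ * Complex.I)) r‖
          ≤ C * (n : ℝ) ^ ℓ * r ^ ((n : ℝ) + 1 - ℓ) * (1 - r) ^ (-((ℓ : ℝ) + 1 / 2)) *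
            Real.sqrt (∑' k : ℤ, ‖c k‖ ^ 2) := by
  refine ⟨2 ^ ℓ * √(2 * (2 * ℓ).factorial), mul_pos (by positivity)
    (Real.sqrt_pos.2 (by positivity)), fun n hn c hc hS θ => ?_⟩
  set a : ℤ → ℂ := fun k => c k * Complex.exp ((k : ℂ) * θ * Complex.I)
  have hnorm : ∀ k, ‖a k‖ = ‖c k‖ := fun k => by simp [a, Complex.norm_exp]
  have hU : (fun r : ℝ =>
      ∑' k : ℤ, c k * (r : ℂ) ^ k.natAbs * Complex.exp ((k : ℂ) * θ * Complex.I)) =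
      termwiseIteratedDeriv a 0 := by
    funext r
    simp [termwiseIteratedDeriv, a, mul_right_comm]
  have haS : Summable fun k => ‖a k‖ ^ 2 := by simpa only [hnorm] using hS
  have ha := norm_le_sqrt_tsum_norm_sq haS
  have hIoo : Ioo (0 : ℝ) 1 ⊆ Ioo (-1) 1 := Ioo_subset_Ioo_left (by norm_num)
  rw [hU]
  refine ⟨(contDiffOn_termwiseIteratedDeriv ha ℓ 0).mono hIoo, fun r hr => ?_⟩
  rw [eqOn_iteratedDeriv_termwiseIteratedDeriv ha ℓ (hIoo hr)]
  simpa only [hnorm] using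
    norm_termwiseIteratedDeriv_le hn (fun k hk => by simp [a, hc k hk]) haS ℓ hr

theorem stmt8 (ℓ : ℕ) (hℓ : 1 ≤ ℓ) :
    ∃ C > 0, ∀ n : ℕ, 1 ≤ n → ∀ c : ℤ → ℂ,
      (∀ k : ℤ, k.natAbs ≤ n → c k = 0) →
      (Summable fun k : ℤ => ‖c k‖ ^ 2) → ∀ θ : ℝ,
      ContDiffOn ℝ ℓ
        (fun r : ℝ =>
          ∑' k : ℤ, c k * (r : ℂ) ^ k.natAbs * Complex.exp ((k : ℂ) * θ * Complex.I))
        (Set.Ioo 0 1) ∧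
      ∀ r ∈ Set.Ioo (0:ℝ) 1,
        ‖iteratedDeriv ℓ
            (fun r : ℝ =>
              ∑' k : ℤ, c k * (r : ℂ) ^ k.natAbs * Complex.exp ((k : ℂ) * θ * Complex.I)) r‖
          ≤ C * (n : ℝ) ^ ℓ * r ^ ((n : ℝ) + 1 - ℓ) * (1 - r) ^ (-((ℓ : ℝ) + 1 / 2)) *
            Real.sqrt (∑' k : ℤ, ‖c k‖ ^ 2) :=
  stmt8_general ℓ
end
end

section
/- For every p with 1 < p < 2 and every bounded open set Ω ⊂ ℝ² there exists a constant C > 0 (depending only on p and the diameter of Ω) such that for all distinct a, b ∈ Ω, ( ∫_Ω ‖ (x−a)/‖x−a‖² − (x−b)/‖x−b‖² ‖^p dx )^{1/p} ≤ C · ‖a − b‖^{(2/p) − 1}. -/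
/-!
The inversion identity `‖u/‖u‖² - v/‖v‖²‖ = ‖u - v‖ / (‖u‖ ‖v‖)` turns the integrand into
`‖a - b‖ᵖ (‖x - a‖ ‖x - b‖)⁻ᵖ`. After rescaling by `d = ‖a - b‖`, if `x` is at distance `r`
from the nearer pole, it is at distance at least `max (1/2) r` from the other, so the integrand
is dominated by `d⁻ᵖ (M ‖(x - a)/d‖ + M ‖(x - b)/d‖)` with the radial profile
`M r = r⁻ᵖ (max (1/2) r)⁻ᵖ`. In dimension `n`, `M` is integrable near `0` because `p < n` and at
infinity because `2p > n`, and translating and rescaling back yields `2 (∫ M) dⁿ⁻ᵖ`.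
-/

open MeasureTheory Metric Module

noncomputable section

def inversionMajorant (p r : ℝ) : ℝ := r ^ (-p) * (max (1 / 2) r) ^ (-p)

theorem inversionMajorant_nonneg (p : ℝ) {r : ℝ} (hr : 0 ≤ r) : 0 ≤ inversionMajorant p r :=
  mul_nonneg (Real.rpow_nonneg hr _) (Real.rpow_nonneg (by positivity) _)

theorem inversionMajorant_le {p r : ℝ} (hp : 0 ≤ p) (hr : 0 ≤ r) :
    inversionMajorant p r ≤ 2 ^ p * r ^ (-p) := by
  have h : (max (1 / 2) r) ^ (-p) ≤ (1 / 2 : ℝ) ^ (-p) :=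
    Real.rpow_le_rpow_of_nonpos (by norm_num) (le_max_left _ _) (neg_nonpos.2 hp)
  have h2 : (1 / 2 : ℝ) ^ (-p) = 2 ^ p := by
    rw [one_div, Real.inv_rpow (by norm_num), ← Real.rpow_neg (by norm_num), neg_neg]
  rw [h2] at h
  rw [inversionMajorant, mul_comm (2 ^ p)]
  exact mul_le_mul_of_nonneg_left h (Real.rpow_nonneg hr _)

theorem inversionMajorant_le_of_one_le {p r : ℝ} (hp : 0 ≤ p) (hr : 1 ≤ r) :
    inversionMajorant p r ≤ 4 ^ p * (1 + r) ^ (-(2 * p)) :=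
  calc inversionMajorant p r = (r * r) ^ (-p) := by
        rw [inversionMajorant, max_eq_right (by linarith),
          Real.mul_rpow (by linarith) (by linarith)]
    _ ≤ ((1 + r) ^ 2 / 4) ^ (-p) :=
        Real.rpow_le_rpow_of_nonpos (by positivity) (by nlinarith) (neg_nonpos.2 hp)
    _ = 4 ^ p * (1 + r) ^ (-(2 * p)) := by
        rw [Real.div_rpow (by positivity) (by norm_num), Real.rpow_neg (by norm_num : (0 : ℝ) ≤ 4),
          ← Real.rpow_natCast, ← Real.rpow_mul (by positivity), div_inv_eq_mul, mul_comm]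
        push_cast
        ring_nf

section Normed

variable {E : Type*} [NormedAddCommGroup E]

theorem rpow_neg_le_inversionMajorant {p : ℝ} (hp : 0 ≤ p) {u v : E} (huv : 1 ≤ ‖u - v‖)
    (hle : ‖u‖ ≤ ‖v‖) : (‖u‖ * ‖v‖) ^ (-p) ≤ inversionMajorant p ‖u‖ := by
  have hv : 1 / 2 ≤ ‖v‖ := by linarith [norm_sub_le u v]
  have hmax : max (1 / 2) ‖u‖ ≤ ‖v‖ := max_le hv hle
  rw [Real.mul_rpow (norm_nonneg u) (norm_nonneg v), inversionMajorant]
  exact mul_le_mul_of_nonneg_left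
    (Real.rpow_le_rpow_of_nonpos (by positivity) hmax (neg_nonpos.2 hp)) (by positivity)

theorem rpow_neg_le_inversionMajorant_add {p : ℝ} (hp : 0 ≤ p) {u v : E} (huv : 1 ≤ ‖u - v‖) :
    (‖u‖ * ‖v‖) ^ (-p) ≤ inversionMajorant p ‖u‖ + inversionMajorant p ‖v‖ := by
  have hu := inversionMajorant_nonneg p (norm_nonneg u)
  have hv := inversionMajorant_nonneg p (norm_nonneg v)
  rcases le_total ‖u‖ ‖v‖ with hle | hle
  · linarith [rpow_neg_le_inversionMajorant hp huv hle]
  · rw [norm_sub_rev] at huv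
    rw [mul_comm]
    linarith [rpow_neg_le_inversionMajorant hp huv hle]

end Normed

section InnerProduct

variable {E : Type*} [NormedAddCommGroup E] [InnerProductSpace ℝ E]

theorem norm_inv_sq_smul_sub_inv_sq_smul {u v : E} (hu : u ≠ 0) (hv : v ≠ 0) :
    ‖(‖u‖ ^ 2)⁻¹ • u - (‖v‖ ^ 2)⁻¹ • v‖ = ‖u - v‖ / (‖u‖ * ‖v‖) := by
  have h := EuclideanGeometry.dist_inversion_inversion hu hv 1
  simp only [EuclideanGeometry.inversion, dist_eq_norm, vsub_eq_sub, vadd_eq_add, sub_zero,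
    add_zero, one_div, inv_pow, one_pow] at h
  rw [h]
  field_simp

theorem norm_inv_sq_smul_sub_rpow_le {p : ℝ} (hp : 0 ≤ p) {a b x : E} (hab : a ≠ b)
    (hxa : x ≠ a) (hxb : x ≠ b) :
    ‖(‖x - a‖ ^ 2)⁻¹ • (x - a) - (‖x - b‖ ^ 2)⁻¹ • (x - b)‖ ^ p ≤
      ‖a - b‖ ^ (-p) * (inversionMajorant p ‖‖a - b‖⁻¹ • (x - a)‖ +
        inversionMajorant p ‖‖a - b‖⁻¹ • (x - b)‖) := by
  set d := ‖a - b‖ with hd_def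
  have hd : 0 < d := norm_pos_iff.2 (sub_ne_zero.2 hab)
  have hscale (y : E) : ‖d⁻¹ • y‖ = d⁻¹ * ‖y‖ := by
    rw [norm_smul, Real.norm_of_nonneg (inv_nonneg.2 hd.le)]
  have hsep : 1 ≤ ‖d⁻¹ • (x - a) - d⁻¹ • (x - b)‖ := by
    rw [← smul_sub, sub_sub_sub_cancel_left, hscale, norm_sub_rev, inv_mul_cancel₀ hd.ne']
  have hlhs : ‖(‖x - a‖ ^ 2)⁻¹ • (x - a) - (‖x - b‖ ^ 2)⁻¹ • (x - b)‖ ^ p =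
      d ^ (-p) * (‖d⁻¹ • (x - a)‖ * ‖d⁻¹ • (x - b)‖) ^ (-p) := by
    rw [norm_inv_sq_smul_sub_inv_sq_smul (sub_ne_zero.2 hxa) (sub_ne_zero.2 hxb),
      sub_sub_sub_cancel_left, norm_sub_rev, ← hd_def, hscale, hscale, Real.rpow_neg hd.le,
      Real.rpow_neg (by positivity), ← Real.inv_rpow hd.le, ← Real.inv_rpow (by positivity),
      ← Real.mul_rpow (by positivity) (by positivity)]
    congr 1
    field_simp
  rw [hlhs]
  exact mul_le_mul_of_nonneg_left (rpow_neg_le_inversionMajorant_add hp hsep)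
    (Real.rpow_nonneg hd.le _)

end InnerProduct

section Integral

variable {E : Type*} [NormedAddCommGroup E] [MeasurableSpace E] [BorelSpace E]
  {μ : Measure E} [μ.IsAddHaarMeasure]

theorem integrable_inversionMajorant_norm [NormedSpace ℝ E] [FiniteDimensional ℝ E] {p : ℝ}
    (hp₁ : (finrank ℝ E : ℝ) < 2 * p) (hp₂ : p < finrank ℝ E) :
    Integrable (fun y ↦ inversionMajorant p ‖y‖) μ := by
  have hp : 0 < p := by linarith [(Nat.cast_nonneg (finrank ℝ E) : (0 : ℝ) ≤ _)]
  have hdim : 1 ≤ finrank ℝ E := by exact_mod_cast (show (0 : ℝ) < finrank ℝ E by linarith)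
  have hmeas : AEStronglyMeasurable (fun y : E ↦ inversionMajorant p ‖y‖) μ := by
    unfold inversionMajorant; fun_prop
  rw [← integrableOn_univ, ← Set.union_compl_self (ball (0 : E) 1)]
  refine IntegrableOn.union ?_ ?_
  · refine integrableOn_ball_of_norm_le_rpow hdim hp₂ (C := 2 ^ p) (.of_forall fun y ↦ ?_) hmeas
    rw [Real.norm_of_nonneg (inversionMajorant_nonneg p (norm_nonneg y))]
    exact inversionMajorant_le hp.le (norm_nonneg y)
  · refine ((integrable_one_add_norm hp₁).const_mul (4 ^ p)).integrableOn.mono' hmeas.restrict ?_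
    refine (ae_restrict_iff' measurableSet_ball.compl).2 (.of_forall fun y hy ↦ ?_)
    rw [Set.mem_compl_iff, mem_ball_zero_iff, not_lt] at hy
    rw [Real.norm_of_nonneg (inversionMajorant_nonneg p (norm_nonneg y))]
    exact inversionMajorant_le_of_one_le hp.le hy

theorem setIntegral_norm_inv_sq_smul_sub_rpow_le [InnerProductSpace ℝ E] [FiniteDimensional ℝ E]
    {p : ℝ} (hp₁ : (finrank ℝ E : ℝ) < 2 * p) (hp₂ : p < finrank ℝ E) (s : Set E) {a b : E}
    (hab : a ≠ b) :
    ∫ x in s, ‖(‖x - a‖ ^ 2)⁻¹ • (x - a) - (‖x - b‖ ^ 2)⁻¹ • (x - b)‖ ^ p ∂μ ≤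
      2 * (∫ y, inversionMajorant p ‖y‖ ∂μ) * ‖a - b‖ ^ ((finrank ℝ E : ℝ) - p) := by
  have : Nontrivial E := nontrivial_of_ne a b hab
  have hp : 0 < p := by linarith [(Nat.cast_nonneg (finrank ℝ E) : (0 : ℝ) ≤ _)]
  set d := ‖a - b‖
  have hd : 0 < d := norm_pos_iff.2 (sub_ne_zero.2 hab)
  set G : E → ℝ := fun x ↦ d ^ (-p) *
    (inversionMajorant p ‖d⁻¹ • (x - a)‖ + inversionMajorant p ‖d⁻¹ • (x - b)‖)
  have hM := integrable_inversionMajorant_norm (μ := μ) hp₁ hp₂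
  have hMd (c : E) : Integrable (fun x ↦ inversionMajorant p ‖d⁻¹ • (x - c)‖) μ :=
    (hM.comp_smul (inv_ne_zero hd.ne')).comp_sub_right c
  have hMd_integral (c : E) : ∫ x, inversionMajorant p ‖d⁻¹ • (x - c)‖ ∂μ =
      d ^ finrank ℝ E * ∫ y, inversionMajorant p ‖y‖ ∂μ := by
    rw [integral_sub_right_eq_self (fun x ↦ inversionMajorant p ‖d⁻¹ • x‖) c,
      Measure.integral_comp_inv_smul_of_nonneg μ (fun y ↦ inversionMajorant p ‖y‖) hd.le,
      smul_eq_mul]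
  have hG : Integrable G μ := ((hMd a).add (hMd b)).const_mul _
  have hG_nonneg : 0 ≤ G := fun x ↦ mul_nonneg (Real.rpow_nonneg hd.le _)
    (add_nonneg (inversionMajorant_nonneg p (norm_nonneg _))
      (inversionMajorant_nonneg p (norm_nonneg _)))
  calc ∫ x in s, ‖(‖x - a‖ ^ 2)⁻¹ • (x - a) - (‖x - b‖ ^ 2)⁻¹ • (x - b)‖ ^ p ∂μ
      ≤ ∫ x in s, G x ∂μ := by
        refine integral_mono_of_nonneg (.of_forall fun x ↦ by positivity) hG.integrableOn
          (ae_restrict_of_ae ?_)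
        filter_upwards [μ.ae_ne a, μ.ae_ne b] with x hxa hxb
        exact norm_inv_sq_smul_sub_rpow_le hp.le hab hxa hxb
    _ ≤ ∫ x, G x ∂μ := setIntegral_le_integral hG (.of_forall hG_nonneg)
    _ = 2 * (∫ y, inversionMajorant p ‖y‖ ∂μ) * d ^ ((finrank ℝ E : ℝ) - p) := by
        rw [integral_const_mul, integral_add (hMd a) (hMd b), hMd_integral, hMd_integral,
          sub_eq_neg_add, Real.rpow_add hd, Real.rpow_natCast]
        ring

end Integral

theorem stmt12_general (p : ℝ) (hp1 : 1 < p) (hp2 : p < 2)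
    (Ω : Set (EuclideanSpace ℝ (Fin 2))) :
    ∃ C > 0, ∀ a ∈ Ω, ∀ b ∈ Ω, a ≠ b →
      (∫ x in Ω, ‖(‖x - a‖ ^ 2)⁻¹ • (x - a) - (‖x - b‖ ^ 2)⁻¹ • (x - b)‖ ^ p) ^ (1 / p)
        ≤ C * ‖a - b‖ ^ (2 / p - 1) := by
  have hdim : (finrank ℝ (EuclideanSpace ℝ (Fin 2)) : ℝ) = 2 := by
    rw [finrank_euclideanSpace_fin, Nat.cast_ofNat]
  set K := 2 * ∫ y : EuclideanSpace ℝ (Fin 2), inversionMajorant p ‖y‖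
  have hK : 0 ≤ K := mul_nonneg zero_le_two
    (integral_nonneg fun y ↦ inversionMajorant_nonneg p (norm_nonneg y))
  refine ⟨(K + 1) ^ (1 / p), by positivity, fun a _ b _ hab ↦ ?_⟩
  have hbound := setIntegral_norm_inv_sq_smul_sub_rpow_le (μ := volume) (p := p)
    (by rw [hdim]; linarith) (by rw [hdim]; exact hp2) Ω hab
  rw [hdim] at hbound
  have hd : 0 ≤ ‖a - b‖ ^ (2 - p) := Real.rpow_nonneg (norm_nonneg _) _
  calc (∫ x in Ω, ‖(‖x - a‖ ^ 2)⁻¹ • (x - a) - (‖x - b‖ ^ 2)⁻¹ • (x - b)‖ ^ p) ^ (1 / p)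
      ≤ ((K + 1) * ‖a - b‖ ^ (2 - p)) ^ (1 / p) :=
        Real.rpow_le_rpow (integral_nonneg fun x ↦ by positivity)
          (hbound.trans (by nlinarith)) (by positivity)
    _ = (K + 1) ^ (1 / p) * ‖a - b‖ ^ (2 / p - 1) := by
        rw [Real.mul_rpow (by positivity) hd, ← Real.rpow_mul (norm_nonneg _)]
        congr 2
        field_simp

theorem stmt12 (p : ℝ) (hp1 : 1 < p) (hp2 : p < 2)
    (Ω : Set (EuclideanSpace ℝ (Fin 2))) (hΩo : IsOpen Ω) (hΩb : Bornology.IsBounded Ω) :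
    ∃ C > 0, ∀ a ∈ Ω, ∀ b ∈ Ω, a ≠ b →
      (∫ x in Ω, ‖(‖x - a‖ ^ 2)⁻¹ • (x - a) - (‖x - b‖ ^ 2)⁻¹ • (x - b)‖ ^ p) ^ (1 / p)
        ≤ C * ‖a - b‖ ^ (2 / p - 1) :=
  stmt12_general p hp1 hp2 Ω
end
end

section
/- There exists a constant C > 0 such that for all a, b in the open unit disk of ℝ² ≅ ℂ, ( ∫₀^{2π} | ln|e^{iθ} − a| − ln|e^{iθ} − b| |² dθ )^{1/2} ≤ C · |a − b| / min(1 − |a|, 1 − |b|). -/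
/- On the unit circle `‖e^{iθ} - a‖ ≥ 1 - ‖a‖`, and `log` is `1/m`-Lipschitz on `[m, ∞)`; together with
`|‖z - a‖ - ‖z - b‖| ≤ ‖a - b‖` this bounds the integrand uniformly by `‖a - b‖ / m` with
`m = min (1 - ‖a‖) (1 - ‖b‖)`, so the `L²` norm over `[0, 2π]` is at most `√(2π) ‖a - b‖ / m`. -/

open scoped Interval

lemma Real.abs_log_sub_log_le {x y m : ℝ} (hm : 0 < m) (hx : m ≤ x) (hy : m ≤ y) :
    |Real.log x - Real.log y| ≤ |x - y| / m := by
  wlog hyx : y ≤ x generalizing x y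
  · rw [abs_sub_comm, abs_sub_comm x]
    exact this hy hx (le_of_not_ge hyx)
  have hy0 : 0 < y := hm.trans_le hy
  have hx0 : 0 < x := hy0.trans_le hyx
  rw [abs_of_nonneg (sub_nonneg.2 (Real.log_le_log hy0 hyx)), abs_of_nonneg (sub_nonneg.2 hyx)]
  calc Real.log x - Real.log y = Real.log (x / y) := (Real.log_div hx0.ne' hy0.ne').symm
    _ ≤ x / y - 1 := Real.log_le_sub_one_of_pos (div_pos hx0 hy0)
    _ = (x - y) / y := by field_simp
    _ ≤ (x - y) / m := div_le_div_of_nonneg_left (sub_nonneg.2 hyx) hm hy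

lemma abs_log_norm_sub_sub_log_norm_sub_le {E : Type*} [SeminormedAddCommGroup E] {x a b : E}
    {m : ℝ} (hm : 0 < m) (ha : m ≤ ‖x - a‖) (hb : m ≤ ‖x - b‖) :
    |Real.log ‖x - a‖ - Real.log ‖x - b‖| ≤ ‖a - b‖ / m := by
  calc |Real.log ‖x - a‖ - Real.log ‖x - b‖| ≤ |‖x - a‖ - ‖x - b‖| / m :=
        Real.abs_log_sub_log_le hm ha hb
    _ ≤ ‖a - b‖ / m := by
        gcongr
        simpa [norm_sub_rev b a] using abs_norm_sub_norm_le (x - a) (x - b)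

lemma sqrt_intervalIntegral_sq_le {f : ℝ → ℝ} {a b M : ℝ} (hM : 0 ≤ M)
    (hf : ∀ x ∈ Ι a b, |f x| ≤ M) :
    Real.sqrt (∫ x in a..b, |f x| ^ 2) ≤ Real.sqrt |b - a| * M := by
  have hint : ∫ x in a..b, |f x| ^ 2 ≤ M ^ 2 * |b - a| := by
    refine (le_abs_self _).trans <| (Real.norm_eq_abs _).symm.trans_le <|
      intervalIntegral.norm_integral_le_of_norm_le_const fun x hx => ?_
    rw [Real.norm_eq_abs, abs_pow, abs_abs]
    exact pow_le_pow_left₀ (abs_nonneg _) (hf x hx) 2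
  calc Real.sqrt (∫ x in a..b, |f x| ^ 2) ≤ Real.sqrt (M ^ 2 * |b - a|) := Real.sqrt_le_sqrt hint
    _ = Real.sqrt |b - a| * M := by
        rw [Real.sqrt_mul (sq_nonneg M), Real.sqrt_sq hM, mul_comm]

lemma Complex.one_sub_norm_le_norm_exp_mul_I_sub (θ : ℝ) (a : ℂ) :
    1 - ‖a‖ ≤ ‖Complex.exp (θ * Complex.I) - a‖ := by
  simpa [Complex.norm_exp_ofReal_mul_I] using norm_sub_norm_le (Complex.exp (θ * Complex.I)) a

theorem stmt13 :
    ∃ C > 0, ∀ a b : ℂ, ‖a‖ < 1 → ‖b‖ < 1 →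
      Real.sqrt (∫ θ in (0:ℝ)..(2 * Real.pi),
          |Real.log ‖Complex.exp (θ * Complex.I) - a‖
            - Real.log ‖Complex.exp (θ * Complex.I) - b‖| ^ 2)
        ≤ C * ‖a - b‖ / min (1 - ‖a‖) (1 - ‖b‖) := by
  refine ⟨Real.sqrt (2 * Real.pi), Real.sqrt_pos.2 Real.two_pi_pos, fun a b ha hb => ?_⟩
  set m := min (1 - ‖a‖) (1 - ‖b‖)
  have hm : 0 < m := lt_min (by linarith) (by linarith)
  have hpointwise : ∀ θ : ℝ, θ ∈ Ι 0 (2 * Real.pi) →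
      |Real.log ‖Complex.exp (θ * Complex.I) - a‖
        - Real.log ‖Complex.exp (θ * Complex.I) - b‖| ≤ ‖a - b‖ / m := fun θ _ =>
    abs_log_norm_sub_sub_log_norm_sub_le hm
      ((min_le_left _ _).trans (Complex.one_sub_norm_le_norm_exp_mul_I_sub θ a))
      ((min_le_right _ _).trans (Complex.one_sub_norm_le_norm_exp_mul_I_sub θ b))
  calc _ ≤ Real.sqrt |2 * Real.pi - 0| * (‖a - b‖ / m) :=
        sqrt_intervalIntegral_sq_le (by positivity) hpointwise
    _ = Real.sqrt (2 * Real.pi) * ‖a - b‖ / m := by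
        rw [sub_zero, abs_of_pos Real.two_pi_pos, mul_div_assoc]
end

section
/- Let N ≥ 2 be an integer, ρ > 0, and let a = (a₁,…,a_N) and b = (b₁,…,b_N) be N-tuples of points in ℝ² such that ‖a_j − a_k‖ ≥ ρ and ‖b_j − b_k‖ ≥ ρ for all j ≠ k. Then ∑_{1 ≤ j ≠ k ≤ N} ‖ (b_j − b_k)/‖b_j − b_k‖² − (a_j − a_k)/‖a_j − a_k‖² ‖ ≤ 2 N (N−1) · ρ^{−2} · max_{1 ≤ j ≤ N} ‖a_j − b_j‖. -/
/-!
The map `x ↦ x / ‖x‖²` is inversion in the unit circle, so it sends `x, y` to points at distance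
`‖x - y‖ / (‖x‖ ‖y‖)`. For `x = a_j - a_k`, `y = b_j - b_k` the numerator is at most
`‖a_j - b_j‖ + ‖a_k - b_k‖ ≤ 2 max_i ‖a_i - b_i‖` and the denominator at least `ρ²`;
summing over the `N (N - 1)` ordered pairs `j ≠ k` gives the bound.
-/

open Finset

section InverseSquareField

variable {F : Type*} [NormedAddCommGroup F] [InnerProductSpace ℝ F]

theorem norm_inv_sq_smul_sub_inv_sq_smul_s18 {x y : F} (hx : x ≠ 0) (hy : y ≠ 0) :
    ‖(‖y‖ ^ 2)⁻¹ • y - (‖x‖ ^ 2)⁻¹ • x‖ = ‖x - y‖ / (‖x‖ * ‖y‖) := by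
  have h := dist_div_norm_sq_smul hx hy 1
  simp only [one_div, inv_pow, one_pow, dist_eq_norm] at h
  rw [norm_sub_rev, h, inv_mul_eq_div]

theorem norm_inv_sq_smul_sub_inv_sq_smul_le {x y : F} {ρ : ℝ} (hρ : 0 < ρ)
    (hx : ρ ≤ ‖x‖) (hy : ρ ≤ ‖y‖) :
    ‖(‖y‖ ^ 2)⁻¹ • y - (‖x‖ ^ 2)⁻¹ • x‖ ≤ ‖x - y‖ / ρ ^ 2 := by
  have hx0 : x ≠ 0 := norm_pos_iff.mp (hρ.trans_le hx)
  have hy0 : y ≠ 0 := norm_pos_iff.mp (hρ.trans_le hy)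
  rw [norm_inv_sq_smul_sub_inv_sq_smul_s18 hx0 hy0, sq]
  gcongr

end InverseSquareField

theorem sum_sum_ite_ne_const {ι : Type*} [Fintype ι] [DecidableEq ι] (c : ℝ) :
    ∑ j : ι, ∑ k : ι, (if j ≠ k then c else 0)
      = (Fintype.card ι : ℝ) * ((Fintype.card ι : ℝ) - 1) * c := by
  have h (j : ι) : ∑ k : ι, (if j ≠ k then c else 0)
      = ∑ _k : ι, c - ∑ k : ι, (if j = k then c else 0) := by
    rw [← sum_sub_distrib]
    congr! 1 with k
    split_ifs <;> simp_all
  simp only [h, sum_ite_eq, mem_univ, if_true, sum_const, card_univ, nsmul_eq_mul]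
  ring

theorem norm_sub_sub_sub_le_two_mul_iSup {ι E : Type*} [Finite ι] [SeminormedAddCommGroup E]
    (a b : ι → E) (j k : ι) :
    ‖(a j - a k) - (b j - b k)‖ ≤ 2 * ⨆ i, ‖a i - b i‖ := by
  have hle (i : ι) : ‖a i - b i‖ ≤ ⨆ i, ‖a i - b i‖ :=
    le_ciSup (Set.finite_range fun i ↦ ‖a i - b i‖).bddAbove i
  calc ‖(a j - a k) - (b j - b k)‖ = ‖(a j - b j) - (a k - b k)‖ := by congr 1; abel
    _ ≤ ‖a j - b j‖ + ‖a k - b k‖ := norm_sub_le _ _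
    _ ≤ 2 * ⨆ i, ‖a i - b i‖ := by linarith [hle j, hle k]

theorem stmt18_general (N : ℕ) (ρ : ℝ) (hρ : 0 < ρ)
    (a b : Fin N → EuclideanSpace ℝ (Fin 2))
    (ha : ∀ j k : Fin N, j ≠ k → ρ ≤ ‖a j - a k‖)
    (hb : ∀ j k : Fin N, j ≠ k → ρ ≤ ‖b j - b k‖) :
    ∑ j : Fin N, ∑ k : Fin N,
        (if j ≠ k then
          ‖(‖b j - b k‖ ^ 2)⁻¹ • (b j - b k) - (‖a j - a k‖ ^ 2)⁻¹ • (a j - a k)‖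
        else 0)
      ≤ 2 * (N : ℝ) * ((N : ℝ) - 1) / ρ ^ 2 * ⨆ j : Fin N, ‖a j - b j‖ := by
  set M := ⨆ j : Fin N, ‖a j - b j‖
  have hterm (j k : Fin N) (hjk : j ≠ k) :
      ‖(‖b j - b k‖ ^ 2)⁻¹ • (b j - b k) - (‖a j - a k‖ ^ 2)⁻¹ • (a j - a k)‖ ≤ 2 * M / ρ ^ 2 :=
    calc _ ≤ ‖(a j - a k) - (b j - b k)‖ / ρ ^ 2 :=
          norm_inv_sq_smul_sub_inv_sq_smul_le hρ (ha j k hjk) (hb j k hjk)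
      _ ≤ 2 * M / ρ ^ 2 := by gcongr; exact norm_sub_sub_sub_le_two_mul_iSup a b j k
  calc _ ≤ ∑ j : Fin N, ∑ k : Fin N, (if j ≠ k then 2 * M / ρ ^ 2 else 0) := by
        gcongr with j _ k _
        split_ifs with hjk
        · exact hterm j k hjk
        · rfl
    _ = _ := by rw [sum_sum_ite_ne_const, Fintype.card_fin]; ring

theorem stmt18 (N : ℕ) (hN : 2 ≤ N) (ρ : ℝ) (hρ : 0 < ρ)
    (a b : Fin N → EuclideanSpace ℝ (Fin 2))
    (ha : ∀ j k : Fin N, j ≠ k → ρ ≤ ‖a j - a k‖)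
    (hb : ∀ j k : Fin N, j ≠ k → ρ ≤ ‖b j - b k‖) :
    ∑ j : Fin N, ∑ k : Fin N,
        (if j ≠ k then
          ‖(‖b j - b k‖ ^ 2)⁻¹ • (b j - b k) - (‖a j - a k‖ ^ 2)⁻¹ • (a j - a k)‖
        else 0)
      ≤ 2 * (N : ℝ) * ((N : ℝ) - 1) / ρ ^ 2 * ⨆ j : Fin N, ‖a j - b j‖ :=
  stmt18_general N ρ hρ a b ha hb
end
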